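/- Let p ≥ 2 and let T be a spider with p legs, each of length at least 2, and let β(T) = min{ ν(T − e) : e an edge of T }. Then for every n with n ≥ the number of vertices of T, ar(K_n, T) ≥ (β(T) − 1)·n − C(β(T), 2) + r, where r = 2 if exactly one leg of T has even length and r = 1 otherwise, and C(m,2) denotes the binomial coefficient m choose 2. -/

import Mathlib

open SimpleGraph Finset

/-- Number of colors used by an edge-coloring of the complete graph on `Fin n`. -/
noncomputable def colorCount {n : ℕ} (c : Sym2 (Fin n) → ℕ) : ℕ :=
  (c '' (⊤ : SimpleGraph (Fin n)).edgeSet).ncard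

/-- The coloring `c` of `K_n` admits a rainbow copy of the graph `G`. -/
def HasRainbowCopy {α : Type*} {n : ℕ} (c : Sym2 (Fin n) → ℕ) (G : SimpleGraph α) : Prop :=
  ∃ f : α → Fin n, Function.Injective f ∧
    ∀ e₁ ∈ G.edgeSet, ∀ e₂ ∈ G.edgeSet, e₁ ≠ e₂ → c (Sym2.map f e₁) ≠ c (Sym2.map f e₂)

/-- The anti-Ramsey number `ar(K_n, G)`: the maximum number of colors in an edge-coloring
of `K_n` with no rainbow copy of `G`. -/
noncomputable def antiRamsey (n : ℕ) {α : Type*} (G : SimpleGraph α) : ℕ :=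
  sSup {m | ∃ c : Sym2 (Fin n) → ℕ, ¬ HasRainbowCopy c G ∧ colorCount c = m}

/-- The spider with `p` legs of lengths `l 0, …, l (p-1)`: `none` is the center, and the
`i`-th leg is the path `center - (i,0) - (i,1) - ⋯ - (i, l i - 1)` (with `l i` edges). -/
def spider (p : ℕ) (l : Fin p → ℕ) : SimpleGraph (Option (Σ i : Fin p, Fin (l i))) where
  Adj u v :=
    (∃ a, u = none ∧ v = some a ∧ a.2.val = 0) ∨
    (∃ a, v = none ∧ u = some a ∧ a.2.val = 0) ∨
    (∃ a b, u = some a ∧ v = some b ∧ a.1 = b.1 ∧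
      (a.2.val + 1 = b.2.val ∨ b.2.val + 1 = a.2.val))
  symm := by
    constructor
    rintro u v h
    rcases h with ⟨a, h1, h2, h3⟩ | ⟨a, h1, h2, h3⟩ | ⟨a, b, h1, h2, h3, h4⟩
    · exact Or.inr (Or.inl ⟨a, h1, h2, h3⟩)
    · exact Or.inl ⟨a, h1, h2, h3⟩
    · exact Or.inr (Or.inr ⟨b, a, h2, h1, h3.symm, h4.symm⟩)
  loopless := by
    constructor
    rintro u h
    rcases h with ⟨a, h1, h2, h3⟩ | ⟨a, h1, h2, h3⟩ | ⟨a, b, h1, h2, h3, h4⟩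
    · rw [h1] at h2; cases h2
    · rw [h2] at h1; cases h1
    · rw [h1] at h2; injection h2 with h; subst h; omega

/-- `s` is a matching in `G`: a set of edges of `G` which pairwise share no vertex. -/
def IsMatchingIn {V : Type*} (G : SimpleGraph V) (s : Finset (Sym2 V)) : Prop :=
  (∀ e ∈ s, e ∈ G.edgeSet) ∧
  ∀ e₁ ∈ s, ∀ e₂ ∈ s, e₁ ≠ e₂ → ∀ v, v ∈ e₁ → v ∉ e₂

/-- The matching number `ν(G)`: the maximum size of a matching in `G`. -/
noncomputable def matchingNumber {V : Type*} (G : SimpleGraph V) : ℕ :=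
  sSup {m | ∃ s : Finset (Sym2 V), IsMatchingIn G s ∧ s.card = m}

/-!
Let `k = β - 1`. Color the edges of `K_n` meeting `{0, …, k - 1}` with pairwise distinct colors
and all other edges with color `0`, except that, when exactly one leg is even, the edge
`{k, k + 1}` gets its own color `1`; this uses `k·n - C(k + 1, 2) + r` colors. In a rainbow copy
of `T` at most one edge has color `0` and at most one has color `1`, and all the other edges meet
the `k` vertices `{0, …, k - 1}`, so deleting those (at most two) edges from `T` leaves matching
number at most `k`. Deleting one edge leaves at least `β = k + 1` by definition of `β`. Two
edges `e₁, e₂` are deleted only when exactly one leg `j` is even, and then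
`β ≤ ν(T - e) ≤ ∑ ⌊lᵢ / 2⌋ ≤ ν(T - e₁ - e₂)`: for `e` the second edge of leg `j` a vertex cover
gives the middle inequality, and a matching picking every other edge of each leg, rerouted around
the deleted edges and using the center on at most one leg, gives the last one.
-/

section Matching

variable {V : Type*} {G H : SimpleGraph V} {s : Finset (Sym2 V)}

lemma IsMatchingIn.mono (hs : IsMatchingIn G s) (h : G ≤ H) : IsMatchingIn H s :=
  ⟨fun e he => edgeSet_mono h (hs.1 e he), hs.2⟩

lemma IsMatchingIn.card_le_of_cover (hs : IsMatchingIn G s) {C : Finset V}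
    (hC : ∀ e ∈ G.edgeSet, ∃ v ∈ C, v ∈ e) : #s ≤ #C :=
  card_le_card_of_forall_subsingleton (fun e v => v ∈ e) (fun e he => hC e (hs.1 e he))
    fun v _ e₁ he₁ e₂ he₂ => by_contra fun hne => hs.2 e₁ he₁.1 e₂ he₂.1 hne v he₁.2 he₂.2

lemma IsMatchingIn.two_mul_card_le [Fintype V] (hs : IsMatchingIn G s) :
    2 * #s ≤ Fintype.card V := by
  classical
  rw [mul_comm, ← card_univ, ← mul_one #univ]
  refine card_mul_le_card_mul (fun e v => v ∈ e) (fun e he => ?_) fun v _ => ?_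
  · induction e with
    | _ x y =>
      have hxy : x ≠ y := G.ne_of_adj (hs.1 _ he)
      have : univ.bipartiteAbove (fun e v => v ∈ e) s(x, y) = {x, y} := by
        ext; simp [bipartiteAbove]
      rw [this, card_pair hxy]
  · refine card_le_one.2 fun e₁ he₁ e₂ he₂ => by_contra fun hne => ?_
    rw [mem_bipartiteBelow] at he₁ he₂
    exact hs.2 e₁ he₁.1 e₂ he₂.1 hne v he₁.2 he₂.2

lemma IsMatchingIn.card_le_matchingNumber [Finite V] (hs : IsMatchingIn G s) :
    #s ≤ matchingNumber G := by
  classical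
  have := Fintype.ofFinite V
  exact le_csSup ⟨Fintype.card (Sym2 V), by rintro _ ⟨t, -, rfl⟩; exact card_le_univ t⟩ ⟨s, hs, rfl⟩

lemma matchingNumber_le {m : ℕ} (h : ∀ s, IsMatchingIn G s → #s ≤ m) : matchingNumber G ≤ m :=
  csSup_le ⟨0, ∅, ⟨by simp, by simp⟩, rfl⟩ fun _ ⟨s, hs, hm⟩ => hm ▸ h s hs

lemma matchingNumber_mono [Finite V] (h : G ≤ H) : matchingNumber G ≤ matchingNumber H :=
  matchingNumber_le fun _ hs => (hs.mono h).card_le_matchingNumber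

lemma matchingNumber_le_card_of_cover {C : Finset V} (hC : ∀ e ∈ G.edgeSet, ∃ v ∈ C, v ∈ e) :
    matchingNumber G ≤ #C :=
  matchingNumber_le fun _ hs => hs.card_le_of_cover hC

lemma two_mul_matchingNumber_le [Fintype V] : 2 * matchingNumber G ≤ Fintype.card V := by
  have : matchingNumber G ≤ Fintype.card V / 2 :=
    matchingNumber_le fun _ hs => by have := hs.two_mul_card_le; omega
  omega

lemma matchingNumber_le_of_forall_exists_lt {g : V → ℕ} (hg : g.Injective) {k : ℕ} [Finite V]
    (h : ∀ e ∈ G.edgeSet, ∃ v ∈ e, g v < k) : matchingNumber G ≤ k := by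
  classical
  have := Fintype.ofFinite V
  refine (matchingNumber_le_card_of_cover (C := {v | g v < k}) fun e he => ?_).trans ?_
  · obtain ⟨v, hv, hvk⟩ := h e he
    exact ⟨v, by simpa using hvk, hv⟩
  · simpa using card_le_card_of_injOn g (t := range k) (by intro v hv; simpa using hv) hg.injOn

end Matching

def altIco (a b : ℕ) : Finset ℕ := {q ∈ Finset.Ico a b | q % 2 = a % 2}

@[simp] lemma mem_altIco {a b q : ℕ} : q ∈ altIco a b ↔ a ≤ q ∧ q < b ∧ q % 2 = a % 2 := by
  simp [altIco, and_assoc]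

lemma card_altIco (a b : ℕ) : #(altIco a b) = (b - a + 1) / 2 := by
  have : altIco a b = (range ((b - a + 1) / 2)).image (a + 2 * ·) := by
    ext q
    simp only [mem_altIco, mem_image, mem_range]
    constructor
    · rintro ⟨h₁, h₂, h₃⟩
      exact ⟨(q - a) / 2, by omega, by omega⟩
    · rintro ⟨m, hm, rfl⟩
      omega
  rw [this, card_image_of_injective _ fun m m' h => by simpa using h, card_range]

lemma disjoint_altIco {a b c d : ℕ} (h : b ≤ c) : Disjoint (altIco a b) (altIco c d) :=
  Finset.disjoint_left.2 fun q hq hq' => by simp only [mem_altIco] at hq hq'; omega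

def IsLegMatching (L : ℕ) (S : Finset ℕ) : Prop :=
  ∀ q ∈ S, q < L ∧ ∀ q' ∈ S, q < q' → q + 2 ≤ q'

lemma isLegMatching_altIco {L b : ℕ} (a : ℕ) (hb : b ≤ L) : IsLegMatching L (altIco a b) :=
  fun q hq => by
    simp only [mem_altIco] at hq
    exact ⟨by omega, fun q' hq' _ => by simp only [mem_altIco] at hq'; omega⟩

lemma IsLegMatching.union {L : ℕ} {A B : Finset ℕ} (hA : IsLegMatching L A)
    (hB : IsLegMatching L B) (hAB : ∀ a ∈ A, ∀ b ∈ B, a + 2 ≤ b) : IsLegMatching L (A ∪ B) := by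
  intro q hq
  rcases mem_union.1 hq with hq | hq
  · refine ⟨(hA q hq).1, fun q' hq' hlt => ?_⟩
    rcases mem_union.1 hq' with hq' | hq'
    exacts [(hA q hq).2 q' hq' hlt, hAB q hq q' hq']
  · refine ⟨(hB q hq).1, fun q' hq' hlt => ?_⟩
    rcases mem_union.1 hq' with hq' | hq'
    · have := hAB q' hq' q hq; omega
    · exact (hB q hq).2 q' hq' hlt

lemma altIco_gap {a b c d : ℕ} (h : b < c) : ∀ x ∈ altIco a b, ∀ y ∈ altIco c d, x + 2 ≤ y := by
  intro x hx y hy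
  simp only [mem_altIco] at hx hy
  omega

lemma exists_legMatching_avoid {L q : ℕ} (hq : q < L) :
    ∃ S, IsLegMatching L S ∧ q ∉ S ∧ (0 ∈ S → Even L) ∧ L / 2 ≤ #S := by
  by_cases h : Even L ∧ Odd q
  · refine ⟨altIco 0 q ∪ altIco (q + 1) L, (isLegMatching_altIco 0 hq.le).union
      (isLegMatching_altIco _ le_rfl) (altIco_gap (by omega)), by simp, fun _ => h.1, ?_⟩
    rw [card_union_of_disjoint (disjoint_altIco (by omega)), card_altIco, card_altIco]
    rw [Nat.even_iff, Nat.odd_iff] at h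
    omega
  · refine ⟨altIco 1 q ∪ altIco (q + 1) L, (isLegMatching_altIco 1 hq.le).union
      (isLegMatching_altIco _ le_rfl) (altIco_gap (by omega)), by simp, by simp, ?_⟩
    rw [card_union_of_disjoint (disjoint_altIco (by omega)), card_altIco, card_altIco]
    rw [Nat.even_iff, Nat.odd_iff] at h
    omega

lemma exists_legMatching_avoid_two {L q₁ q₂ : ℕ} (a : ℕ) (ha : a ≤ 1) (h₁₂ : q₁ ≤ q₂)
    (hq₂ : q₂ < L) : ∃ S, IsLegMatching L S ∧ q₁ ∉ S ∧ q₂ ∉ S ∧ (0 ∈ S → a = 0) ∧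
      (q₁ + 1 - a) / 2 + (q₂ - q₁) / 2 + (L - q₂) / 2 ≤ #S := by
  refine ⟨altIco a q₁ ∪ altIco (q₁ + 1) q₂ ∪ altIco (q₂ + 1) L, ?_, by simp; omega,
    by simp; omega, by simp; omega, ?_⟩
  · refine ((isLegMatching_altIco a (by omega)).union (isLegMatching_altIco _ hq₂.le)
      (altIco_gap (by omega))).union (isLegMatching_altIco _ le_rfl) fun x hx y hy => ?_
    simp only [mem_union, mem_altIco] at hx hy
    omega
  · rw [card_union_of_disjoint, card_union_of_disjoint (disjoint_altIco (by omega)),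
      card_altIco, card_altIco, card_altIco]
    · omega
    · exact disjoint_union_left.2 ⟨disjoint_altIco (by omega), disjoint_altIco (by omega)⟩

section Spider

variable {p : ℕ} {l : Fin p → ℕ}

/-- The vertex at distance `t` from the center along leg `k` (a junk `none` when `l k < t`). -/
def legVertex (l : Fin p → ℕ) (k : Fin p) : ℕ → Option (Σ i : Fin p, Fin (l i))
  | 0 => none
  | t + 1 => if h : t < l k then some ⟨k, t, h⟩ else none

def legEdge (l : Fin p → ℕ) (k : Fin p) (q : ℕ) : Sym2 (Option (Σ i : Fin p, Fin (l i))) :=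
  s(legVertex l k q, legVertex l k (q + 1))

lemma legVertex_eq_legVertex_iff {k k' : Fin p} {t t' : ℕ} (ht : t ≤ l k) (ht' : t' ≤ l k') :
    legVertex l k t = legVertex l k' t' ↔ t = 0 ∧ t' = 0 ∨ k = k' ∧ t = t' := by
  cases t <;> cases t' <;> simp [legVertex, Nat.lt_of_succ_le, *]
  rintro rfl
  simp [Fin.ext_iff]

lemma mem_legEdge {k : Fin p} {q : ℕ} {v : Option (Σ i : Fin p, Fin (l i))} :
    v ∈ legEdge l k q ↔ v = legVertex l k q ∨ v = legVertex l k (q + 1) :=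
  Sym2.mem_iff

lemma legEdge_eq_legEdge_iff {k k' : Fin p} {q q' : ℕ} (hq : q < l k) (hq' : q' < l k') :
    legEdge l k q = legEdge l k' q' ↔ k = k' ∧ q = q' := by
  refine ⟨fun h => ?_, by rintro ⟨rfl, rfl⟩; rfl⟩
  rw [legEdge, legEdge, Sym2.eq_iff, legVertex_eq_legVertex_iff hq.le hq'.le,
    legVertex_eq_legVertex_iff hq hq', legVertex_eq_legVertex_iff hq.le hq',
    legVertex_eq_legVertex_iff hq hq'.le] at h
  omega

lemma legVertex_succ {k : Fin p} (t : Fin (l k)) : legVertex l k (t + 1) = some ⟨k, t⟩ := by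
  simp [legVertex]

lemma legEdge_mem_edgeSet {k : Fin p} {q : ℕ} (hq : q < l k) :
    legEdge l k q ∈ (spider p l).edgeSet := by
  cases q with
  | zero => exact Or.inl ⟨⟨k, 0, hq⟩, rfl, legVertex_succ (⟨0, hq⟩ : Fin (l k)), rfl⟩
  | succ t =>
    exact Or.inr <| Or.inr ⟨⟨k, t, by omega⟩, ⟨k, t + 1, hq⟩,
      legVertex_succ (⟨t, _⟩ : Fin (l k)), legVertex_succ (⟨t + 1, hq⟩ : Fin (l k)), rfl,
      Or.inl rfl⟩

lemma exists_eq_legEdge {e : Sym2 (Option (Σ i : Fin p, Fin (l i)))}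
    (he : e ∈ (spider p l).edgeSet) : ∃ k q, q < l k ∧ e = legEdge l k q := by
  induction e with | _ u v => ?_
  rcases he with ⟨⟨k, t⟩, rfl, rfl, ht⟩ | ⟨⟨k, t⟩, rfl, rfl, ht⟩ |
    ⟨⟨k, t⟩, ⟨k', t'⟩, rfl, rfl, rfl, ht | ht⟩
  · refine ⟨k, t, t.isLt, ?_⟩
    rw [legEdge, legVertex_succ, ht]
    rfl
  · refine ⟨k, t, t.isLt, ?_⟩
    rw [legEdge, legVertex_succ, ht, Sym2.eq_swap]
    rfl
  · refine ⟨k, t', t'.isLt, ?_⟩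
    rw [legEdge, legVertex_succ, ← ht, legVertex_succ]
  · refine ⟨k, t, t.isLt, ?_⟩
    rw [legEdge, legVertex_succ, ← ht, legVertex_succ, Sym2.eq_swap]

lemma eq_zero_and_eq_zero_or_of_mem_legEdge {k k' : Fin p} {q q' : ℕ} (hq : q < l k)
    (hq' : q' < l k') {v : Option (Σ i : Fin p, Fin (l i))} (hv : v ∈ legEdge l k q)
    (hv' : v ∈ legEdge l k' q') : q = 0 ∧ q' = 0 ∨ k = k' ∧ q ≤ q' + 1 ∧ q' ≤ q + 1 := by
  rw [mem_legEdge] at hv hv'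
  rcases hv with rfl | rfl <;> rcases hv' with h | h <;>
    have := (legVertex_eq_legVertex_iff (by omega) (by omega)).1 h <;> omega

lemma sum_card_le_matchingNumber_deleteEdges (S : Fin p → Finset ℕ)
    (hS : ∀ k, IsLegMatching (l k) (S k)) (hcenter : {k | 0 ∈ S k}.Subsingleton)
    {D : Set (Sym2 (Option (Σ i : Fin p, Fin (l i))))} (hD : ∀ k, ∀ q ∈ S k, legEdge l k q ∉ D) :
    ∑ k, #(S k) ≤ matchingNumber ((spider p l).deleteEdges D) := by
  classical
  have hinj : ∀ k k', ∀ q ∈ S k, ∀ q' ∈ S k', legEdge l k q = legEdge l k' q' → k = k' ∧ q = q' :=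
    fun k k' q hq q' hq' => (legEdge_eq_legEdge_iff ((hS k q hq).1) ((hS k' q' hq').1)).1
  set M := univ.biUnion fun k => (S k).image (legEdge l k)
  have hM : IsMatchingIn ((spider p l).deleteEdges D) M := by
    simp only [IsMatchingIn, M, mem_biUnion, mem_image, mem_univ, true_and, edgeSet_deleteEdges]
    refine ⟨?_, ?_⟩
    · rintro _ ⟨k, q, hq, rfl⟩
      exact ⟨legEdge_mem_edgeSet (hS k q hq).1, hD k q hq⟩
    · rintro _ ⟨k, q, hq, rfl⟩ _ ⟨k', q', hq', rfl⟩ hne v hv hv'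
      rcases eq_zero_and_eq_zero_or_of_mem_legEdge (hS k q hq).1 (hS k' q' hq').1 hv hv' with
        ⟨rfl, rfl⟩ | ⟨rfl, h₁, h₂⟩
      · exact hne (by rw [hcenter hq hq'])
      · have := (hS k q hq).2 q' hq'
        have := (hS k q' hq').2 q hq
        obtain rfl : q = q' := by omega
        exact hne rfl
  calc ∑ k, #(S k) = #M := by
        rw [card_biUnion]
        · exact sum_congr rfl fun k _ => (card_image_of_injOn fun q hq q' hq' h =>
            (hinj k k q hq q' hq' h).2).symm
        · intro k _ k' _ hne
          simp only [Function.onFun, Finset.disjoint_left, mem_image]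
          rintro _ ⟨q, hq, rfl⟩ ⟨q', hq', h⟩
          exact hne (hinj k' k q' hq' q hq h).1.symm
    _ ≤ _ := hM.card_le_matchingNumber

lemma matchingNumber_deleteEdges_le_of_legCover (X : Fin p → Finset ℕ)
    {D : Set (Sym2 (Option (Σ i : Fin p, Fin (l i))))}
    (hX : ∀ k q, 0 < q → q < l k → legEdge l k q ∉ D → q ∈ X k ∨ q + 1 ∈ X k) :
    matchingNumber ((spider p l).deleteEdges D) ≤ 1 + ∑ k, #(X k) := by
  classical
  set C := insert none (univ.biUnion fun k => (X k).image (legVertex l k))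
  have hC : ∀ e ∈ ((spider p l).deleteEdges D).edgeSet, ∃ v ∈ C, v ∈ e := by
    intro e he'
    obtain ⟨he, heD⟩ := (edgeSet_deleteEdges D ▸ he' :)
    obtain ⟨k, q, hq, rfl⟩ := exists_eq_legEdge he
    have hmem : ∀ t ∈ X k, legVertex l k t ∈ C := fun t ht =>
      mem_insert_of_mem (mem_biUnion.2 ⟨k, mem_univ k, mem_image_of_mem _ ht⟩)
    rcases Nat.eq_zero_or_pos q with rfl | hq₀
    · exact ⟨none, mem_insert_self _ _, mem_legEdge.2 (Or.inl rfl)⟩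
    · rcases hX k q hq₀ hq heD with h | h
      · exact ⟨_, hmem q h, mem_legEdge.2 (Or.inl rfl)⟩
      · exact ⟨_, hmem (q + 1) h, mem_legEdge.2 (Or.inr rfl)⟩
  calc matchingNumber _ ≤ #C := matchingNumber_le_card_of_cover hC
    _ ≤ 1 + ∑ k, #((X k).image (legVertex l k)) := by
        rw [add_comm]; exact (card_insert_le _ _).trans (by gcongr; exact card_biUnion_le)
    _ ≤ 1 + ∑ k, #(X k) := by gcongr; exact card_image_le

lemma matchingNumber_deleteEdges_le_sum_half {j : Fin p} (hj : Even (l j)) (hj₂ : 2 ≤ l j) :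
    matchingNumber ((spider p l).deleteEdges {legEdge l j 1}) ≤ ∑ k, l k / 2 := by
  classical
  set X : Fin p → Finset ℕ := fun k => if k = j then altIco 3 (l j) else altIco 2 (l k + 1)
  have hX : ∀ k, #(X k) + (if k = j then 1 else 0) = l k / 2 := by
    intro k
    by_cases hk : k = j
    · subst hk
      simp only [X, if_pos, card_altIco]
      rw [Nat.even_iff] at hj
      omega
    · simp only [X, if_neg hk, card_altIco]; omega
  refine (matchingNumber_deleteEdges_le_of_legCover X fun k q hq₀ hq hne => ?_).trans ?_
  · by_cases hk : k = j
    · subst hk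
      have : q ≠ 1 := by rintro rfl; exact hne rfl
      simp only [X, if_pos, mem_altIco]
      rw [Nat.even_iff] at hj
      omega
    · simp only [X, if_neg hk, mem_altIco]
      omega
  · have := congrArg (fun f : Fin p → ℕ => ∑ k, f k) (funext hX)
    simp only [sum_add_distrib, sum_ite_eq', mem_univ, if_true] at this
    omega

lemma sum_card_le_matchingNumber_deleteEdges_pair (S : Fin p → Finset ℕ)
    (hS : ∀ k, IsLegMatching (l k) (S k)) (hcenter : {k | 0 ∈ S k}.Subsingleton)
    {i₁ i₂ : Fin p} {q₁ q₂ : ℕ} (hq₁ : q₁ < l i₁) (hq₂ : q₂ < l i₂) (h₁ : q₁ ∉ S i₁)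
    (h₂ : q₂ ∉ S i₂) :
    ∑ k, #(S k) ≤
      matchingNumber ((spider p l).deleteEdges {legEdge l i₁ q₁, legEdge l i₂ q₂}) := by
  refine sum_card_le_matchingNumber_deleteEdges S hS hcenter fun k q hq => ?_
  simp only [Set.mem_insert_iff, Set.mem_singleton_iff,
    legEdge_eq_legEdge_iff (hS k q hq).1 hq₁, legEdge_eq_legEdge_iff (hS k q hq).1 hq₂]
  rintro (⟨rfl, rfl⟩ | ⟨rfl, rfl⟩) <;> contradiction

lemma sum_half_le_matchingNumber_deleteEdges_of_ne (hodd : {k | Even (l k)}.Subsingleton)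
    {i₁ i₂ : Fin p} {q₁ q₂ : ℕ} (hi : i₁ ≠ i₂) (hq₁ : q₁ < l i₁) (hq₂ : q₂ < l i₂) :
    ∑ k, l k / 2 ≤
      matchingNumber ((spider p l).deleteEdges {legEdge l i₁ q₁, legEdge l i₂ q₂}) := by
  classical
  obtain ⟨A₁, hA₁, hq₁A, hA₁0, hA₁c⟩ := exists_legMatching_avoid hq₁
  obtain ⟨A₂, hA₂, hq₂A, hA₂0, hA₂c⟩ := exists_legMatching_avoid hq₂
  set S : Fin p → Finset ℕ := fun k =>
    if k = i₁ then A₁ else if k = i₂ then A₂ else altIco 1 (l k)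
  have hS : ∀ k, IsLegMatching (l k) (S k) ∧ (0 ∈ S k → Even (l k)) ∧ l k / 2 ≤ #(S k) := by
    intro k
    simp only [S]
    split_ifs with h₁ h₂
    · subst h₁; exact ⟨hA₁, hA₁0, hA₁c⟩
    · subst h₂; exact ⟨hA₂, hA₂0, hA₂c⟩
    · rw [card_altIco]; exact ⟨isLegMatching_altIco 1 le_rfl, by simp, by omega⟩
  refine (sum_le_sum fun k _ => (hS k).2.2).trans <|
    sum_card_le_matchingNumber_deleteEdges_pair S (fun k => (hS k).1)
      (hodd.anti fun k hk => (hS k).2.1 hk) hq₁ hq₂ (by simpa [S] using hq₁A)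
      (by simpa [S, hi.symm] using hq₂A)

lemma sum_half_le_matchingNumber_deleteEdges_same_leg_of_odd {i : Fin p} (hi : Odd (l i))
    {q₁ q₂ : ℕ} (h₁₂ : q₁ ≤ q₂) (hq₂ : q₂ < l i) :
    ∑ k, l k / 2 ≤
      matchingNumber ((spider p l).deleteEdges {legEdge l i q₁, legEdge l i q₂}) := by
  classical
  obtain ⟨A, hA, hq₁A, hq₂A, -, hAc⟩ := exists_legMatching_avoid_two 0 zero_le_one h₁₂ hq₂
  set S : Fin p → Finset ℕ := fun k => if k = i then A else altIco 1 (l k)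
  have hS : ∀ k, IsLegMatching (l k) (S k) ∧ (0 ∈ S k → k = i) ∧ l k / 2 ≤ #(S k) := by
    intro k
    simp only [S]
    split_ifs with h
    · subst h
      rw [Nat.odd_iff] at hi
      exact ⟨hA, fun _ => rfl, by omega⟩
    · rw [card_altIco]; exact ⟨isLegMatching_altIco 1 le_rfl, by simp, by omega⟩
  refine (sum_le_sum fun k _ => (hS k).2.2).trans <|
    sum_card_le_matchingNumber_deleteEdges_pair S (fun k => (hS k).1)
      (Set.subsingleton_singleton.anti fun k hk => (hS k).2.1 hk) (h₁₂.trans_lt hq₂) hq₂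
      (by simpa [S] using hq₁A) (by simpa [S] using hq₂A)

lemma sum_half_le_matchingNumber_deleteEdges_same_leg_of_even (hp : 2 ≤ p)
    (hodd : {k | Even (l k)}.Subsingleton) {i : Fin p} (hi : Even (l i)) {q₁ q₂ : ℕ}
    (h₁₂ : q₁ ≤ q₂) (hq₂ : q₂ < l i) :
    ∑ k, l k / 2 ≤
      matchingNumber ((spider p l).deleteEdges {legEdge l i q₁, legEdge l i q₂}) := by
  classical
  obtain ⟨k₀, hk₀⟩ := Fintype.exists_ne_of_one_lt_card (by rw [Fintype.card_fin]; omega) i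
  have hk₀odd : ¬Even (l k₀) := fun h => hk₀ (hodd h hi)
  rw [Nat.not_even_iff] at hk₀odd
  obtain ⟨A, hA, hq₁A, hq₂A, hA0, hAc⟩ := exists_legMatching_avoid_two 1 le_rfl h₁₂ hq₂
  set S : Fin p → Finset ℕ := fun k =>
    if k = i then A else if k = k₀ then altIco 0 (l k) else altIco 1 (l k)
  -- leg `i` may lose one edge, which leg `k₀` makes up for by using the center
  have hS : ∀ k, IsLegMatching (l k) (S k) ∧ (0 ∈ S k → k = k₀) ∧
      l k / 2 + (if k = k₀ then 1 else 0) ≤ #(S k) + (if k = i then 1 else 0) := by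
    intro k
    simp only [S]
    split_ifs with h h' h'
    · exact absurd (h'.symm.trans h) hk₀
    · subst h
      exact ⟨hA, fun h0 => absurd (hA0 h0) one_ne_zero, by omega⟩
    · subst h'
      rw [card_altIco]
      exact ⟨isLegMatching_altIco 0 le_rfl, fun _ => rfl, by omega⟩
    · rw [card_altIco]
      exact ⟨isLegMatching_altIco 1 le_rfl, by simp, by omega⟩
  have hsum : ∑ k, l k / 2 + 1 ≤ ∑ k, #(S k) + 1 := by
    simpa [sum_add_distrib] using sum_le_sum (s := univ) fun k _ => (hS k).2.2
  refine (Nat.le_of_add_le_add_right hsum).trans <|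
    sum_card_le_matchingNumber_deleteEdges_pair S (fun k => (hS k).1)
      (Set.subsingleton_singleton.anti fun k hk => (hS k).2.1 hk) (h₁₂.trans_lt hq₂) hq₂
      (by simpa [S] using hq₁A) (by simpa [S] using hq₂A)

lemma sum_half_le_matchingNumber_deleteEdges_pair (hp : 2 ≤ p)
    (hodd : {k | Even (l k)}.Subsingleton) {e₁ e₂ : Sym2 (Option (Σ i : Fin p, Fin (l i)))}
    (he₁ : e₁ ∈ (spider p l).edgeSet) (he₂ : e₂ ∈ (spider p l).edgeSet) :
    ∑ k, l k / 2 ≤ matchingNumber ((spider p l).deleteEdges {e₁, e₂}) := by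
  obtain ⟨i₁, q₁, hq₁, rfl⟩ := exists_eq_legEdge he₁
  obtain ⟨i₂, q₂, hq₂, rfl⟩ := exists_eq_legEdge he₂
  obtain rfl | hi := eq_or_ne i₁ i₂
  · clear he₁ he₂
    wlog h : q₁ ≤ q₂ generalizing q₁ q₂
    · rw [Set.pair_comm]
      exact this q₂ hq₂ q₁ hq₁ (le_of_not_ge h)
    rcases Nat.even_or_odd (l i₁) with hi | hi
    · exact sum_half_le_matchingNumber_deleteEdges_same_leg_of_even hp hodd hi h hq₂
    · exact sum_half_le_matchingNumber_deleteEdges_same_leg_of_odd hi h hq₂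
  · exact sum_half_le_matchingNumber_deleteEdges_of_ne hodd hi hq₁ hq₂

lemma le_matchingNumber_deleteEdges_pair (hp : 2 ≤ p) (hl : ∀ i, 2 ≤ l i) {m : ℕ}
    (hm : ∀ e ∈ (spider p l).edgeSet, m ≤ matchingNumber ((spider p l).deleteEdges {e}))
    {e₁ e₂ : Sym2 (Option (Σ i : Fin p, Fin (l i)))} (he₁ : e₁ ∈ (spider p l).edgeSet)
    (he₂ : e₂ ∈ (spider p l).edgeSet) (h : #{i | Even (l i)} = 1 ∨ e₁ = e₂) :
    m ≤ matchingNumber ((spider p l).deleteEdges {e₁, e₂}) := by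
  rcases h with heven | rfl
  · obtain ⟨j, hj⟩ := card_eq_one.1 heven
    have hj' : ∀ i, Even (l i) ↔ i = j := fun i => by simpa using congrArg (i ∈ ·) hj
    calc m ≤ matchingNumber ((spider p l).deleteEdges {legEdge l j 1}) :=
          hm _ (legEdge_mem_edgeSet (by linarith [hl j]))
      _ ≤ ∑ i, l i / 2 := matchingNumber_deleteEdges_le_sum_half ((hj' j).2 rfl) (hl j)
      _ ≤ _ := sum_half_le_matchingNumber_deleteEdges_pair hp
          (fun a ha b hb => ((hj' a).1 ha).trans ((hj' b).1 hb).symm) he₁ he₂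
  · simpa using hm e₁ he₁

lemma edgeSet_spider_nonempty {i : Fin p} (hi : 0 < l i) : (spider p l).edgeSet.Nonempty :=
  ⟨_, legEdge_mem_edgeSet hi⟩

lemma two_mul_matchingNumber_spider_le : 2 * matchingNumber (spider p l) ≤ 1 + ∑ i, l i := by
  simpa [add_comm] using two_mul_matchingNumber_le (G := spider p l)

end Spider

section Coloring

lemma colorCount_le_antiRamsey {α : Type*} {G : SimpleGraph α} {n : ℕ}
    {c : Sym2 (Fin n) → ℕ} (hc : ¬HasRainbowCopy c G) : colorCount c ≤ antiRamsey n G := by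
  refine le_csSup ⟨Nat.card (Sym2 (Fin n)), ?_⟩ ⟨c, hc, rfl⟩
  rintro _ ⟨c', -, rfl⟩
  exact (Set.ncard_image_le (Set.toFinite _)).trans (Set.ncard_le_card _)

def extremalColor (k : ℕ) (b : Bool) (e : Sym2 ℕ) : ℕ :=
  if e.inf < k then Nat.pair e.inf e.sup + 2 else if b ∧ e = s(k, k + 1) then 1 else 0

def extremalColoring (n k : ℕ) (b : Bool) (e : Sym2 (Fin n)) : ℕ :=
  extremalColor k b (e.map Fin.val)

lemma extremalColor_eq_one {k : ℕ} {b : Bool} {e : Sym2 ℕ} (h : extremalColor k b e = 1) :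
    b = true := by
  unfold extremalColor at h
  split_ifs at h with h₁ h₂
  exacts [absurd h (by omega), h₂.1]

lemma exists_mem_lt_of_two_le_extremalColor {k : ℕ} {b : Bool} {e : Sym2 ℕ}
    (h : 2 ≤ extremalColor k b e) : ∃ v ∈ e, v < k := by
  unfold extremalColor at h
  split_ifs at h with h₁
  · induction e with
    | _ u v => rcases min_choice u v with h' | h' <;> simp_all
  all_goals omega

lemma sum_range_sub_add_choose {n k : ℕ} (hk : k ≤ n) :
    ∑ u ∈ range k, (n - u - 1) + (k + 1).choose 2 = k * n := by
  induction k with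
  | zero => simp
  | succ k ih =>
    have := ih (by omega)
    have hc : (k + 2).choose 2 = (k + 1).choose 2 + (k + 1) := by
      rw [Nat.choose_succ_succ', Nat.choose_one_right, add_comm]
    rw [sum_range_succ, hc, add_mul, ← this]
    omega

lemma extremalColor_mem_image {n k u v : ℕ} (b : Bool) (hu : u < n) (hv : v < n) (huv : u ≠ v) :
    extremalColor k b s(u, v) ∈ extremalColoring n k b '' (⊤ : SimpleGraph (Fin n)).edgeSet :=
  ⟨s(⟨u, hu⟩, ⟨v, hv⟩), by simpa [Fin.ext_iff] using huv, rfl⟩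

lemma le_colorCount_extremalColoring {n k : ℕ} (b : Bool) (hkn : k + 2 < n) :
    k * n + (if b then 2 else 1) ≤ colorCount (extremalColoring n k b) + (k + 1).choose 2 := by
  classical
  set A := ((range k).sigma fun u => Ioo u n).image fun x => Nat.pair x.1 x.2 + 2
  set B : Finset ℕ := if b then {0, 1} else {0}
  have hA : #A = ∑ u ∈ range k, (n - u - 1) := by
    rw [card_image_of_injOn, card_sigma]
    · simp
    · rintro ⟨u, v⟩ - ⟨u', v'⟩ - h
      simpa [Nat.pair_eq_pair] using h
  have hB : #B = if b then 2 else 1 := by cases b <;> simp [B]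
  have hAB : Disjoint A B := by
    refine Finset.disjoint_left.2 fun x hx hxB => ?_
    obtain ⟨_, -, rfl⟩ := mem_image.1 hx
    cases b <;> simp [B] at hxB
  have hsub : ↑(A ∪ B) ⊆ extremalColoring n k b '' (⊤ : SimpleGraph (Fin n)).edgeSet := by
    intro x hx
    rcases mem_union.1 (mem_coe.1 hx) with hx | hx
    · obtain ⟨⟨u, v⟩, huv, rfl⟩ := mem_image.1 hx
      simp only [mem_sigma, mem_range, mem_Ioo] at huv
      simpa [extremalColor, huv.1, min_eq_left huv.2.1.le, max_eq_right huv.2.1.le] using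
        extremalColor_mem_image (n := n) (k := k) b (by omega) huv.2.2 huv.2.1.ne
    · have h₀ : 0 ∈ extremalColoring n k b '' (⊤ : SimpleGraph (Fin n)).edgeSet := by
        simpa [extremalColor] using
          extremalColor_mem_image (n := n) (k := k) b (u := k + 1) (by omega) hkn (by omega)
      have h₁ : b → 1 ∈ extremalColoring n k b '' (⊤ : SimpleGraph (Fin n)).edgeSet := by
        rintro rfl
        simpa [extremalColor] using
          extremalColor_mem_image (n := n) (k := k) true (u := k) (v := k + 1) (by omega)
            (by omega) (by omega)
      cases b <;>
        simp only [B, Bool.false_eq_true, if_false, if_true, mem_insert, mem_singleton] at hx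
      · rwa [hx]
      · rcases hx with rfl | rfl
        exacts [h₀, h₁ rfl]
  have hcard := Set.ncard_le_ncard hsub (Set.toFinite _)
  rw [Set.ncard_coe_finset, card_union_of_disjoint hAB, hA, hB] at hcard
  rw [colorCount, ← sum_range_sub_add_choose (by omega : k ≤ n)]
  omega

lemma not_hasRainbowCopy_extremalColoring {V : Type*} [Finite V] {G : SimpleGraph V}
    {n k : ℕ} {b : Bool} (hG : G.edgeSet.Nonempty)
    (hν : ∀ e₁ ∈ G.edgeSet, ∀ e₂ ∈ G.edgeSet, (b ∨ e₁ = e₂) →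
      k < matchingNumber (G.deleteEdges {e₁, e₂})) :
    ¬HasRainbowCopy (extremalColoring n k b) G := by
  rintro ⟨f, hf, hrainbow⟩
  set c : Sym2 V → ℕ := fun e => extremalColoring n k b (e.map f)
  have hclass : ∀ i, ∀ d ∈ G.edgeSet, ∃ x ∈ G.edgeSet, (x = d ∨ c x = i) ∧
      ∀ e ∈ G.edgeSet, c e = i → e = x := by
    intro i d hd
    by_cases h : ∃ x ∈ G.edgeSet, c x = i
    · obtain ⟨x, hx, hxi⟩ := h
      exact ⟨x, hx, Or.inr hxi, fun e he hei =>
        by_contra fun hne => hrainbow e he x hx hne (hei.trans hxi.symm)⟩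
    · simp only [not_exists, not_and] at h
      exact ⟨d, hd, Or.inl rfl, fun e he hei => absurd hei (h e he)⟩
  obtain ⟨d, hd⟩ := hG
  obtain ⟨x, hx, -, hx0⟩ := hclass 0 d hd
  obtain ⟨y, hy, hyx, hy1⟩ := hclass 1 x hx
  have hb : b ∨ x = y := hyx.symm.imp extremalColor_eq_one Eq.symm
  refine (hν x hx y hy hb).not_ge (matchingNumber_le_of_forall_exists_lt (g := fun v => (f v : ℕ))
    (Fin.val_injective.comp hf) fun e he => ?_)
  obtain ⟨he, hexy⟩ := (edgeSet_deleteEdges _ ▸ he :)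
  have h2 : 2 ≤ c e := by
    by_contra h
    interval_cases hce : c e
    · exact hexy (Or.inl (hx0 e he hce))
    · exact hexy (Or.inr (hy1 e he hce))
  obtain ⟨v, hv, hvk⟩ := exists_mem_lt_of_two_le_extremalColor (e := (e.map f).map Fin.val) h2
  rw [Sym2.map_map, Sym2.mem_map] at hv
  obtain ⟨w, hw, rfl⟩ := hv
  exact ⟨w, hw, hvk⟩

lemma le_antiRamsey_of_lt_matchingNumber {V : Type*} [Finite V] {G : SimpleGraph V}
    {n k : ℕ} (b : Bool) (hG : G.edgeSet.Nonempty) (hkn : k + 2 < n)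
    (hν : ∀ e₁ ∈ G.edgeSet, ∀ e₂ ∈ G.edgeSet, (b ∨ e₁ = e₂) →
      k < matchingNumber (G.deleteEdges {e₁, e₂})) :
    k * n + (if b then 2 else 1) ≤ antiRamsey n G + (k + 1).choose 2 :=
  (le_colorCount_extremalColoring b hkn).trans
    (by gcongr; exact colorCount_le_antiRamsey (not_hasRainbowCopy_extremalColoring hG hν))

end Coloring

/-- **Proposition 2.** Let `T` be a spider with `p ≥ 2` legs, each of length at least 2, and
`β(T) = min{ν(T - e) : e ∈ E(T)}`. For every `n ≥ |V(T)| = 1 + Σᵢ lᵢ`,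
`ar(K_n, T) ≥ (β(T) - 1)·n - C(β(T), 2) + r`, where `r = 2` if exactly one leg of `T` has
even length and `r = 1` otherwise. -/
theorem antiRamsey_spider_lower (p : ℕ) (hp : 2 ≤ p) (l : Fin p → ℕ) (hl : ∀ i, 2 ≤ l i)
    (β r : ℕ)
    (hβ : β = sInf {m | ∃ e ∈ (spider p l).edgeSet,
      matchingNumber ((spider p l).deleteEdges {e}) = m})
    (hr1 : (Finset.univ.filter fun i => Even (l i)).card = 1 → r = 2)
    (hr2 : (Finset.univ.filter fun i => Even (l i)).card ≠ 1 → r = 1)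
    (n : ℕ) (hn : 1 + ∑ i, l i ≤ n) :
    ((β : ℤ) - 1) * n - (Nat.choose β 2 : ℤ) + r ≤ (antiRamsey n (spider p l) : ℤ) := by
  classical
  set b := decide ((Finset.univ.filter fun i => Even (l i)).card = 1)
  have hr : r = if b then 2 else 1 := by
    by_cases h : (Finset.univ.filter fun i => Even (l i)).card = 1 <;> simp [b, h, hr1, hr2]
  have h2p : 2 * p ≤ ∑ i, l i := by simpa [mul_comm] using sum_le_sum fun i (_ : i ∈ univ) => hl i
  obtain ⟨e₀, he₀⟩ := edgeSet_spider_nonempty (two_pos.trans_le (hl ⟨0, by omega⟩))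
  have hβle : ∀ e ∈ (spider p l).edgeSet, β ≤ matchingNumber ((spider p l).deleteEdges {e}) :=
    fun e he => hβ ▸ Nat.sInf_le ⟨e, he, rfl⟩
  cases β with
  | zero =>
    have : r ≤ 2 := by rw [hr]; split <;> omega
    push_cast
    linarith
  | succ k =>
    have hkn : k + 2 < n := by
      linarith [hβle e₀ he₀, matchingNumber_mono ((spider p l).deleteEdges_le {e₀}),
        two_mul_matchingNumber_spider_le (l := l)]
    have := le_antiRamsey_of_lt_matchingNumber b ⟨e₀, he₀⟩ hkn fun e₁ he₁ e₂ he₂ h =>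
      le_matchingNumber_deleteEdges_pair hp hl hβle he₁ he₂ (h.imp_left of_decide_eq_true)
    rw [← hr] at this
    zify at this
    push_cast
    linarith
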